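/- arXiv:2508.21297 — 3 statements merged into one kernel-verified Lean document; each statement's English description precedes it below -/
import Mathlib

section
/- Let B ∈ ℂ^{2×2} satisfy ‖I − B‖_F < 1/2, where ‖·‖_F is the Frobenius norm. Then B is not apportionable. Consequently, the open ball of radius 1/2 in Frobenius norm centered at the 2×2 identity matrix consists entirely of non-apportionable matrices. -/
/-- A square complex matrix is *uniform* if all of its entries have the same
modulus `κ` for some nonnegative real `κ`. -/
def IsUniform {ι : Type*} [Fintype ι] (B : Matrix ι ι ℂ) : Prop :=
  ∃ κ : ℝ, 0 ≤ κ ∧ ∀ i j, ‖B i j‖ = κ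

/-- A square complex matrix `A` is *apportionable* if there is an invertible
matrix `M` such that `M * A * M⁻¹` is uniform. -/
def IsApportionable {ι : Type*} [Fintype ι] [DecidableEq ι] (A : Matrix ι ι ℂ) : Prop :=
  ∃ M : Matrix ι ι ℂ, IsUnit M ∧ IsUniform (M * A * M⁻¹)

/-- A nonnegative real `κ` is an *apportionment constant* of `A` if there is an
invertible matrix `M` such that every entry of `M * A * M⁻¹` has modulus `κ`. -/
def IsApportionmentConstant {ι : Type*} [Fintype ι] [DecidableEq ι]
    (A : Matrix ι ι ℂ) (κ : ℝ) : Prop :=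
  0 ≤ κ ∧ ∃ M : Matrix ι ι ℂ, IsUnit M ∧ ∀ i j, ‖(M * A * M⁻¹) i j‖ = κ

/-- `K(A)`, the set of apportionment constants of `A`. -/
def apportionmentConstants {ι : Type*} [Fintype ι] [DecidableEq ι]
    (A : Matrix ι ι ℂ) : Set ℝ :=
  {κ : ℝ | IsApportionmentConstant A κ}

/-- The spectral radius of a complex square matrix: the maximum modulus of its
eigenvalues. -/
noncomputable def specRad {ι : Type*} [Fintype ι] [DecidableEq ι]
    (A : Matrix ι ι ℂ) : ℝ :=
  sSup ((fun z : ℂ => ‖z‖) '' spectrum ℂ A)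

/-- The Frobenius norm of a complex matrix. -/
noncomputable def frobNorm {ι κ : Type*} [Fintype ι] [Fintype κ]
    (A : Matrix ι κ ℂ) : ℝ :=
  Real.sqrt (∑ i, ∑ j, ‖A i j‖ ^ 2)

/-- For a uniform `2 × 2` matrix `U` with nonzero trace,
`Re(tr(U)² ⋅ conj(det U)) ≤ 2 |det U|²`. -/
theorem uniform_constraint_aux (U : Matrix (Fin 2) (Fin 2) ℂ) (κ : ℝ)
    (hκ : ∀ i j, ‖U i j‖ = κ) (ht0 : U.trace ≠ 0) :
    (U.trace ^ 2 * (starRingEnd ℂ) U.det).re ≤ 2 * Complex.normSq U.det := by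
  set p := U 0 0 with hp0
  set r := U 1 1 with hr0
  set q := U 0 1 * U 1 0 with hq0
  have htr : U.trace = p + r := Matrix.trace_fin_two U
  have hdet : U.det = p * r - q := Matrix.det_fin_two U
  set t := U.trace with ht'
  set d := U.det with hd'
  have hκnn : 0 ≤ κ := (hκ 0 0) ▸ norm_nonneg _
  have hκpos : 0 < κ := by
    rcases hκnn.lt_or_eq with h | h
    · exact h
    · exfalso
      apply ht0
      have hp : p = 0 := by
        have := hκ 0 0; rw [← h] at this; exact norm_eq_zero.mp this
      have hr : r = 0 := by
        have := hκ 1 1; rw [← h] at this; exact norm_eq_zero.mp this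
      rw [htr, hp, hr, add_zero]
  have hp : p * (starRingEnd ℂ) p = ((κ^2 : ℝ) : ℂ) := by
    rw [Complex.mul_conj]
    norm_cast
    rw [← Complex.sq_norm, hκ 0 0]
  have hr : r * (starRingEnd ℂ) r = ((κ^2 : ℝ) : ℂ) := by
    rw [Complex.mul_conj]
    norm_cast
    rw [← Complex.sq_norm, hκ 1 1]
  have hq : q * (starRingEnd ℂ) q = ((κ^2 : ℝ) : ℂ)^2 := by
    rw [Complex.mul_conj]
    norm_cast
    rw [← Complex.sq_norm, hq0, norm_mul, hκ 0 1, hκ 1 0]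
    ring
  have hct : (starRingEnd ℂ) t = (starRingEnd ℂ) p + (starRingEnd ℂ) r := by
    rw [htr, map_add]
  have hkey : (p * r) * (starRingEnd ℂ) t = ((κ^2:ℝ):ℂ) * t := by
    rw [hct, htr]
    linear_combination r * hp + p * hr
  have hkeyc : ((starRingEnd ℂ) p * (starRingEnd ℂ) r) * t = ((κ^2:ℝ):ℂ) * (starRingEnd ℂ) t := by
    rw [hct, htr]
    linear_combination ((starRingEnd ℂ) r) * hp + ((starRingEnd ℂ) p) * hr
  have hcd : (starRingEnd ℂ) d = (starRingEnd ℂ) p * (starRingEnd ℂ) r - (starRingEnd ℂ) q := by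
    rw [hdet, map_sub, _root_.map_mul]
  have hstar : p * r * (starRingEnd ℂ) d + d * ((starRingEnd ℂ) p * (starRingEnd ℂ) r)
      = d * (starRingEnd ℂ) d := by
    have hdq : q = p * r - d := by rw [hdet]; ring
    have hq' : (p*r - d) * ((starRingEnd ℂ) p * (starRingEnd ℂ) r - (starRingEnd ℂ) d) = ((κ^2:ℝ):ℂ)^2 := by
      linear_combination ((starRingEnd ℂ) p * (starRingEnd ℂ) r - (starRingEnd ℂ) d) * hdq.symm - q * hcd + hq
    linear_combination ((starRingEnd ℂ) r) * r * hp + ((κ^2:ℝ):ℂ) * hr - hq'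
  have hmain : ((κ^2:ℝ):ℂ) * (t^2 * (starRingEnd ℂ) d) + ((κ^2:ℝ):ℂ) * (((starRingEnd ℂ) t)^2 * d)
      = (d * (starRingEnd ℂ) d) * (t * (starRingEnd ℂ) t) := by
    linear_combination (t * (starRingEnd ℂ) t) * hstar - ((starRingEnd ℂ) d * t) * hkey
      - (d * (starRingEnd ℂ) t) * hkeyc
  have hre : 2 * κ^2 * (t^2 * (starRingEnd ℂ) d).re = Complex.normSq d * Complex.normSq t := by
    have h1 : ((starRingEnd ℂ) t)^2 * d = (starRingEnd ℂ) (t^2 * (starRingEnd ℂ) d) := by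
      rw [_root_.map_mul, _root_.map_pow, Complex.conj_conj]
    rw [h1] at hmain
    have h2 : ((κ^2:ℝ):ℂ) * (t^2 * (starRingEnd ℂ) d) + ((κ^2:ℝ):ℂ) * (starRingEnd ℂ) (t^2 * (starRingEnd ℂ) d)
        = ((κ^2:ℝ):ℂ) * (((2 * (t^2 * (starRingEnd ℂ) d).re : ℝ)) : ℂ) := by
      rw [← mul_add, Complex.add_conj]
    rw [h2, Complex.mul_conj, Complex.mul_conj] at hmain
    have h3 : ((2 * κ^2 * (t^2 * (starRingEnd ℂ) d).re : ℝ) : ℂ)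
        = ((Complex.normSq d * Complex.normSq t : ℝ) : ℂ) := by
      push_cast at hmain ⊢
      linear_combination hmain
    exact_mod_cast h3
  have habs : ‖t‖ ≤ 2 * κ := by
    rw [htr]
    calc ‖p + r‖ ≤ ‖p‖ + ‖r‖ := norm_add_le p r
      _ = 2 * κ := by rw [hκ 0 0, hκ 1 1]; ring
  have hnt : Complex.normSq t ≤ 4 * κ^2 := by
    rw [← Complex.sq_norm]
    nlinarith [norm_nonneg t]
  nlinarith [hre, hnt, Complex.normSq_nonneg d, hκpos, mul_pos hκpos hκpos]

/-- The key analytic inequality near the identity. -/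
theorem near_identity_ineq_aux (a b c f : ℂ)
    (h : Complex.normSq a + Complex.normSq b + Complex.normSq c + Complex.normSq f < 1/4) :
    2 * Complex.normSq ((1+a)*(1+b) - c*f)
      < ((2+a+b)^2 * (starRingEnd ℂ) ((1+a)*(1+b) - c*f)).re := by
  set u : ℂ := a + b with hu0
  set v : ℂ := a*b - c*f with hv0
  have hd : (1+a)*(1+b) - c*f = 1 + u + v := by rw [hu0, hv0]; ring
  have hu : Complex.normSq u ≤ 1/2 := by
    have h2 : Complex.normSq u ≤ 2*(Complex.normSq a + Complex.normSq b) := by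
      simp only [hu0, Complex.normSq_apply, Complex.add_re, Complex.add_im]
      nlinarith [sq_nonneg (a.re - b.re), sq_nonneg (a.im - b.im)]
    nlinarith [Complex.normSq_nonneg c, Complex.normSq_nonneg f]
  have hv : Complex.normSq v ≤ 1/64 := by
    have habs : ‖v‖ ≤ 1/8 := by
      calc ‖v‖ ≤ ‖a*b‖ + ‖c*f‖ := by
            simpa [hv0, sub_eq_add_neg] using norm_add_le (a*b) (-(c*f))
        _ = ‖a‖ * ‖b‖ + ‖c‖ * ‖f‖ := by
            rw [norm_mul, norm_mul]
        _ ≤ 1/8 := by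
            nlinarith [sq_nonneg (‖a‖ - ‖b‖),
              sq_nonneg (‖c‖ - ‖f‖),
              Complex.sq_norm a, Complex.sq_norm b, Complex.sq_norm c, Complex.sq_norm f]
    rw [← Complex.sq_norm]
    nlinarith [norm_nonneg v]
  have ht2 : (2:ℂ)+a+b = 2+u := by rw [hu0]; ring
  clear hu0 hv0
  clear_value u v
  rw [hd, ht2]
  simp only [Complex.normSq_apply] at hu hv
  set x := u.re; set y := u.im; set p := v.re; set q := v.im
  have h71 : (0:ℝ) < x + 71/100 := by nlinarith [sq_nonneg y]
  have hc : p*(x^2-y^2) + q*(2*x*y) ≥ -(1/8)*(x^2+y^2) := by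
    nlinarith [sq_nonneg (p*(2*x*y) - q*(x^2-y^2)),
      sq_nonneg (p*(x^2-y^2) + q*(2*x*y) + (1/8)*(x^2+y^2)), sq_nonneg (x^2+y^2)]
  simp only [Complex.normSq_apply, Complex.mul_re, Complex.mul_im, Complex.add_re,
    Complex.add_im, Complex.one_re, Complex.one_im, Complex.conj_re, Complex.conj_im,
    Complex.re_ofNat, Complex.im_ofNat, pow_two]
  nlinarith [hc, h71, mul_pos h71 h71, mul_pos (mul_pos h71 h71) h71,
    mul_nonneg (sq_nonneg y) h71.le, sq_nonneg p, sq_nonneg q, hu, hv]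

/-- Every `2 × 2` complex matrix within Frobenius distance `1/2` of the
identity is not apportionable. -/
theorem not_apportionable_near_identity (B : Matrix (Fin 2) (Fin 2) ℂ)
    (h : frobNorm (1 - B) < 1 / 2) :
    ¬ IsApportionable B := by
  rintro ⟨M, hM, κ, hκ0, hκ⟩
  -- entrywise bounds
  unfold frobNorm at h
  have hsum : ∑ i, ∑ j, ‖(1 - B) i j‖ ^ 2 < 1/4 := by
    have := (Real.sqrt_lt' (by norm_num : (0:ℝ) < 1/2)).mp h
    norm_num at this
    convert this using 2
    norm_num
  simp only [Fin.sum_univ_two, Matrix.sub_apply, Matrix.one_apply] at hsum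
  norm_num at hsum
  set a : ℂ := B 0 0 - 1 with ha
  set b : ℂ := B 1 1 - 1 with hb
  set c : ℂ := B 0 1 with hc
  set f : ℂ := B 1 0 with hf
  have hbound : Complex.normSq a + Complex.normSq b + Complex.normSq c + Complex.normSq f < 1/4 := by
    have e1 : ‖1 - B 0 0‖ = ‖a‖ := by rw [ha, norm_sub_rev]
    have e2 : ‖1 - B 1 1‖ = ‖b‖ := by rw [hb, norm_sub_rev]
    rw [← Complex.sq_norm, ← Complex.sq_norm, ← Complex.sq_norm, ← Complex.sq_norm,
      ← e1, ← e2]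
    linarith [hsum]
  -- trace and determinant expressions
  have e00 : B 0 0 = 1 + a := by rw [ha]; ring
  have e11 : B 1 1 = 1 + b := by rw [hb]; ring
  have htB : B.trace = 2 + a + b := by
    rw [Matrix.trace_fin_two, e00, e11]; ring
  have hdB : B.det = (1+a)*(1+b) - c*f := by
    rw [Matrix.det_fin_two, e00, e11, hc, hf]
  -- trace is nonzero
  have htne : B.trace ≠ 0 := by
    rw [htB]
    intro h0
    have hab : a + b = -2 := by linear_combination h0
    have h2 : Complex.normSq (a+b) ≤ 2*(Complex.normSq a + Complex.normSq b) := by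
      simp only [Complex.normSq_apply, Complex.add_re, Complex.add_im]
      nlinarith [sq_nonneg (a.re - b.re), sq_nonneg (a.im - b.im)]
    rw [hab] at h2
    simp only [Complex.normSq_apply] at hbound
    simp [Complex.normSq_apply] at h2
    nlinarith [mul_self_nonneg c.re, mul_self_nonneg c.im, mul_self_nonneg f.re,
      mul_self_nonneg f.im, hbound, h2]
  -- similarity invariance of trace and determinant
  have hMd : IsUnit M.det := (Matrix.isUnit_iff_isUnit_det M).mp hM
  have hinv : M⁻¹ * M = 1 := Matrix.nonsing_inv_mul M hMd
  have htr : (M * B * M⁻¹).trace = B.trace := by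
    rw [Matrix.trace_mul_comm, ← Matrix.mul_assoc, hinv, Matrix.one_mul]
  have hdet : (M * B * M⁻¹).det = B.det := by
    rw [Matrix.det_mul, Matrix.det_mul, Matrix.det_nonsing_inv]
    have h0 : M.det ≠ 0 := hMd.ne_zero
    rw [Ring.inverse_eq_inv']
    field_simp
  -- contradiction
  have hup := uniform_constraint_aux (M * B * M⁻¹) κ hκ (by rw [htr]; exact htne)
  rw [htr, hdet] at hup
  have hlow := near_identity_ineq_aux a b c f hbound
  rw [← htB, ← hdB] at hlow
  linarith
end

section
/- Let A = diag(1, −1/2 + i) ∈ ℂ^{2×2} and let B ∈ ℂ^{2×2} satisfy ‖A − B‖_F < 1/12, where ‖·‖_F is the Frobenius norm. Then B is apportionable. Consequently, the open ball of radius 1/12 in Frobenius norm centered at diag(1, −1/2 + i) consists entirely of apportionable matrices. -/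
set_option maxHeartbeats 1600000

open Complex

/- ### Auxiliary lemmas -/

lemma conj_similar {n : Type*} [Fintype n] [DecidableEq n]
    {P Q B C D : Matrix n n ℂ}
    (hP : IsUnit P.det) (hQ : IsUnit Q.det)
    (hBP : B * P = P * D) (hCQ : C * Q = Q * D) :
    IsUnit (Q * P⁻¹) ∧ (Q * P⁻¹) * B * (Q * P⁻¹)⁻¹ = C := by
  have hPu : IsUnit P := (Matrix.isUnit_iff_isUnit_det P).mpr hP
  have hQu : IsUnit Q := (Matrix.isUnit_iff_isUnit_det Q).mpr hQ
  have hPinv : IsUnit P⁻¹ := Matrix.isUnit_nonsing_inv_iff.mpr hPu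
  refine ⟨hQu.mul hPinv, ?_⟩
  rw [Matrix.mul_inv_rev, Matrix.nonsing_inv_nonsing_inv P hP]
  have h1 : P⁻¹ * B * P = D := by
    rw [Matrix.mul_assoc, hBP, ← Matrix.mul_assoc, Matrix.nonsing_inv_mul P hP, Matrix.one_mul]
  calc Q * P⁻¹ * B * (P * Q⁻¹) = Q * (P⁻¹ * B * P) * Q⁻¹ := by
        simp only [Matrix.mul_assoc]
    _ = C * Q * Q⁻¹ := by rw [h1, ← hCQ]
    _ = C := by rw [Matrix.mul_assoc, Matrix.mul_nonsing_inv Q hQ, Matrix.mul_one]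

lemma sq_eq_of_nonneg {x y : ℝ} (hx : 0 ≤ x) (hy : 0 ≤ y) (h : x^2 = y^2) : x = y := by
  rw [← Real.sqrt_sq hx, h, Real.sqrt_sq hy]

lemma rh1 {P Q m n : ℝ} (hP0 : 0 ≤ P) (hQ0 : 0 ≤ Q)
    (h : P^2 + m^2 + n^2 + Q^2 < 1/144) : P ≤ 1/12 ∧ P + Q ≤ 59/500 := by
  constructor
  · nlinarith [sq_nonneg Q, sq_nonneg m, sq_nonneg n]
  · nlinarith [sq_nonneg (P-Q), sq_nonneg m, sq_nonneg n]

lemma rh2 {P Q m n u : ℝ} (hP0 : 0 ≤ P) (hQ0 : 0 ≤ Q) (hm0 : 0 ≤ m) (hn0 : 0 ≤ n)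
    (hu0 : 0 ≤ u) (hu : u^2 = 5/4)
    (h : P^2 + m^2 + n^2 + Q^2 < 1/144) : P*u + Q + P*Q + m*n ≤ 37/288 := by
  have h1 : (P*u + Q)^2 ≤ 1/64 := by nlinarith [sq_nonneg (P - u*Q), sq_nonneg m, sq_nonneg n]
  have h2 : P*u + Q ≤ 1/8 := by nlinarith [mul_nonneg hP0 hu0]
  have h3 : P*Q + m*n ≤ 1/288 := by nlinarith [sq_nonneg (P-Q), sq_nonneg (m-n)]
  linarith

lemma rh_sqrt_ub {x : ℝ} (hx : 0 ≤ x) (hu : x^2 = 5/4) : x ≤ 111804/100000 := by nlinarith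
lemma rh_sqrt_lb {x : ℝ} (hx : 0 ≤ x) (hu : x^2 = 5/4) : 1118/1000 ≤ x := by nlinarith
lemma rh_mul_bound {x y A B : ℝ} (hx : 0 ≤ x) (hy : 0 ≤ y) (hxA : x ≤ A) (hyB : y ≤ B) :
    x*y ≤ A*B := mul_le_mul hxA hyB hy (le_trans hx hxA)
lemma rh3 {Dm f : ℝ} (h1 : 9895/10000 ≤ Dm) (h2 : f ≤ 18819/10000) : f ≤ 2*Dm^2 := by
  nlinarith

lemma numeric_bounds (a b c e : ℂ)
    (hsum : ‖(a-1)‖^2 + ‖b‖^2 + ‖c‖^2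
      + ‖(e - (-(1/2)+I))‖^2 < 1/144) :
    8681/10000 ≤ ((starRingEnd ℂ) ((a+e)^2) * (a*e-b*c)).re ∧
    ((starRingEnd ℂ) ((a+e)^2) * (a*e-b*c)).re ≤ 2 * ‖(a*e-b*c)‖^2 ∧
    9895/10000 ≤ ‖(a*e-b*c)‖ ∧
    1 ≤ ‖(a+e)‖ ∧
    24583/10000 ≤ ‖((a+e)^2 - 4*(a*e-b*c))‖ ∧
    ‖((a+e)^2 - 4*(a*e-b*c) - (5/4 - 3*I))‖ ≤ 7917/10000 ∧
    ‖((a+e) - (1/2+I))‖ ≤ 59/500 ∧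
    ‖(a-1)‖ ≤ 1/12 := by
  have hP0 : 0 ≤ ‖(a-1)‖ := norm_nonneg _
  have hQ0 : 0 ≤ ‖(e - (-(1/2)+I))‖ := norm_nonneg _
  have hm0 : 0 ≤ ‖b‖ := norm_nonneg _
  have hn0 : 0 ≤ ‖c‖ := norm_nonneg _
  obtain ⟨hP12, hPQ⟩ := rh1 (m := ‖b‖) (n := ‖c‖) hP0 hQ0 (by linarith)
  have he₀2 : ‖(-(1/2)+I : ℂ)‖ ^ 2 = 5/4 := by
    rw [Complex.sq_norm]; simp [Complex.normSq_apply]; norm_num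
  have ht₀2 : ‖(1/2+I : ℂ)‖ ^ 2 = 5/4 := by
    rw [Complex.sq_norm]; simp [Complex.normSq_apply]; norm_num
  have he₀ub := rh_sqrt_ub (norm_nonneg _) he₀2
  have he₀lb := rh_sqrt_lb (norm_nonneg _) he₀2
  have ht₀ub := rh_sqrt_ub (norm_nonneg _) ht₀2
  have ht₀lb := rh_sqrt_lb (norm_nonneg _) ht₀2
  have htt₀ : ‖((a+e) - (1/2+I))‖ ≤ 59/500 := by
    calc ‖((a+e) - (1/2+I))‖ = ‖((a-1) + (e - (-(1/2)+I)))‖ := by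
          ring_nf
      _ ≤ ‖(a-1)‖ + ‖(e - (-(1/2)+I))‖ := norm_add_le _ _
      _ ≤ 59/500 := hPQ
  have hde₀ : ‖((a*e-b*c) - (-(1/2)+I))‖ ≤ 37/288 := by
    have hid : (a*e-b*c) - (-(1/2)+I) =
        (((a-1)*(-(1/2)+I) + (e - (-(1/2)+I))) + (a-1)*(e - (-(1/2)+I))) + (-(b*c)) := by
      ring
    rw [hid]
    refine le_trans (norm_add_le _ _) (le_trans (add_le_add_left
      (le_trans (norm_add_le _ _) (add_le_add_left (norm_add_le _ _) _)) _) ?_)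
    simp only [norm_mul, norm_neg]
    have := rh2 hP0 hQ0 hm0 hn0 (norm_nonneg (-(1/2)+I : ℂ)) he₀2 (by linarith)
    linarith
  have hT_ub : ‖(a+e)‖ ≤ 123604/100000 := by
    calc ‖(a+e)‖ = ‖((1/2+I) + ((a+e) - (1/2+I)))‖ := by ring_nf
      _ ≤ ‖(1/2+I : ℂ)‖ + ‖((a+e) - (1/2+I))‖ := norm_add_le _ _
      _ ≤ 123604/100000 := by linarith
  have hT_lb : 1 ≤ ‖(a+e)‖ := by
    have h1 := norm_add_le ((1/2+I : ℂ) - (a+e)) (a+e)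
    rw [sub_add_cancel, norm_sub_rev] at h1
    linarith
  have hDm_ub : ‖(a*e-b*c)‖ ≤ 124652/100000 := by
    have h1 := norm_add_le (-(1/2)+I : ℂ) ((a*e-b*c) - (-(1/2)+I))
    rw [add_sub_cancel] at h1
    linarith
  have hDm_lb : 9895/10000 ≤ ‖(a*e-b*c)‖ := by
    have h1 := norm_add_le ((-(1/2)+I : ℂ) - (a*e-b*c)) (a*e-b*c)
    rw [sub_add_cancel, norm_sub_rev] at h1
    linarith
  have htsq : ‖((a+e)^2 - (1/2+I)^2)‖ ≤ 27779/100000 := by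
    have hid : (a+e)^2 - ((1:ℂ)/2+I)^2 = ((a+e) - (1/2+I)) * ((a+e) + (1/2+I)) := by ring
    rw [hid, norm_mul]
    have h1 : ‖((a+e) + (1/2+I))‖ ≤ 235408/100000 := by
      have := norm_add_le (a+e) (1/2+I)
      linarith
    have := rh_mul_bound (norm_nonneg _) (norm_nonneg _) htt₀ h1
    linarith
  have hf₀ : ((starRingEnd ℂ) (((1:ℂ)/2 + I)^2) * (-(1/2)+I)).re = 11/8 := by
    have h1 : ((1:ℂ)/2 + I)^2 = -3/4 + I := by
      simp [Complex.ext_iff, pow_two, Complex.mul_re, Complex.mul_im]; norm_num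
    rw [h1]
    simp [Complex.mul_re, map_ofNat, Complex.div_re, Complex.div_im, Complex.normSq_apply]
    norm_num
  have hfdiff : |((starRingEnd ℂ) ((a+e)^2) * (a*e-b*c)).re - 11/8| ≤ 5069/10000 := by
    have hre : ((starRingEnd ℂ) ((a+e)^2) * (a*e-b*c)).re - 11/8
        = ((starRingEnd ℂ) ((a+e)^2) * (a*e-b*c)
            - (starRingEnd ℂ) (((1:ℂ)/2+I)^2) * (-(1/2)+I)).re := by
      rw [Complex.sub_re, hf₀]
    rw [hre]
    refine le_trans (Complex.abs_re_le_norm _) ?_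
    have hid : (starRingEnd ℂ) ((a+e)^2) * (a*e-b*c) - (starRingEnd ℂ) (((1:ℂ)/2+I)^2) * (-(1/2)+I)
        = (starRingEnd ℂ) ((a+e)^2 - ((1:ℂ)/2+I)^2) * (a*e-b*c)
          + (starRingEnd ℂ) (((1:ℂ)/2+I)^2) * ((a*e-b*c) - (-(1/2)+I)) := by
      rw [map_sub]; ring
    rw [hid]
    refine le_trans (norm_add_le _ _) ?_
    rw [norm_mul, norm_mul, Complex.norm_conj, Complex.norm_conj, norm_pow, ht₀2]
    have h1 := rh_mul_bound (norm_nonneg _) (norm_nonneg _) htsq hDm_ub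
    nlinarith [hde₀]
  have hf_lb : 8681/10000 ≤ ((starRingEnd ℂ) ((a+e)^2) * (a*e-b*c)).re := by
    have := abs_le.mp hfdiff; linarith [this.1]
  have hf_ub : ((starRingEnd ℂ) ((a+e)^2) * (a*e-b*c)).re ≤ 18819/10000 := by
    have := abs_le.mp hfdiff; linarith [this.2]
  have hz₀ : ((1:ℂ)/2+I)^2 - 4*(-(1/2)+I) = 5/4 - 3*I := by
    simp [Complex.ext_iff, pow_two, Complex.mul_re, Complex.mul_im]; norm_num
  have hzdiff : ‖((a+e)^2 - 4*(a*e-b*c) - (5/4 - 3*I))‖ ≤ 7917/10000 := by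
    have hid : (a+e)^2 - 4*(a*e-b*c) - ((5:ℂ)/4 - 3*I)
        = ((a+e)^2 - ((1:ℂ)/2+I)^2) + (-(4*((a*e-b*c) - (-(1/2)+I)))) := by
      rw [← hz₀]; ring
    rw [hid]
    refine le_trans (norm_add_le _ _) ?_
    rw [norm_neg, norm_mul]
    have h4 : ‖(4 : ℂ)‖ = 4 := by
      rw [show (4:ℂ) = ((4:ℝ):ℂ) by norm_num, Complex.norm_real]; norm_num
    rw [h4]
    linarith
  have habz₀ : ‖((5:ℂ)/4 - 3*I)‖ = 13/4 := by
    have h2 : ‖((5:ℂ)/4 - 3*I)‖ ^ 2 = (13/4)^2 := by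
      rw [Complex.sq_norm]; simp [Complex.normSq_apply]; norm_num
    exact sq_eq_of_nonneg (norm_nonneg _) (by norm_num) h2
  have hz_lb : 24583/10000 ≤ ‖((a+e)^2 - 4*(a*e-b*c))‖ := by
    have h1 := norm_add_le ((5:ℂ)/4 - 3*I - ((a+e)^2 - 4*(a*e-b*c)))
      ((a+e)^2 - 4*(a*e-b*c))
    rw [sub_add_cancel,
      norm_sub_rev ((5:ℂ)/4 - 3*I) ((a+e)^2 - 4*(a*e-b*c)), habz₀] at h1
    linarith
  exact ⟨hf_lb, rh3 hDm_lb hf_ub, hDm_lb, hT_lb, hz_lb, hzdiff, htt₀, hP12⟩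

lemma mu_ne_a {t s a : ℂ} (hts : ‖(t - (1/2+I))‖ ≤ 59/500)
    (ha : ‖(a-1)‖ ≤ 1/12) (hsw : ‖(s - (3/2 - I))‖ ≤ 8899/10000) :
    (t - s)/2 - a ≠ 0 := by
  intro h0
  have hid : (3 - 2*I : ℂ) = -2*((t-s)/2 - a)
      + ((t - (1/2+I)) + (-(s - (3/2-I))) + (-(2*(a-1)))) := by ring
  rw [h0] at hid
  have h1 : ‖(3 - 2*I : ℂ)‖
      ≤ ‖(t - (1/2+I))‖ + ‖(s - (3/2-I))‖ + 2*‖(a-1)‖ := by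
    rw [hid]
    simp only [mul_zero, neg_zero, zero_add]
    refine le_trans (norm_add_le _ _) ?_
    have h2 := norm_add_le (t - (1/2+I)) (-(s - (3/2-I)))
    rw [norm_neg] at h2
    rw [norm_neg, norm_mul]
    have h3 : ‖(2:ℂ)‖ = 2 := by
      rw [show (2:ℂ) = ((2:ℝ):ℂ) by norm_num, Complex.norm_real]; norm_num
    rw [h3]
    linarith
  have h4 : ‖(3 - 2*I : ℂ)‖^2 = 13 := by
    rw [Complex.sq_norm]; simp [Complex.normSq_apply]; norm_num
  nlinarith [norm_nonneg (3 - 2*I : ℂ)]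

lemma rh5 {T r K : ℝ} (hT : 0 < T) (hr2 : r^2 = K^2 - T^2/4) :
    T^2*(1/4+(r/T)^2) = K^2 := by
  field_simp
  ring_nf
  nlinarith [hr2]

lemma rh6 {T Dm f K r : ℝ} (hT : 0 < T) (hf : 0 < f)
    (hK2 : K^2 = Dm^2*T^2/(2*f)) (hr2 : r^2 = K^2 - T^2/4) :
    (1/4+(r/T)^2)^2 * (T^2)^2 - 2*((1/4+(r/T)^2) * f) + Dm^2 = (K^2)^2 := by
  have hX : 1/4+(r/T)^2 = K^2/T^2 := by
    field_simp
    nlinarith [hr2]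
  rw [hX]
  have hDm2 : Dm^2 = 2*f*K^2/T^2 := by
    rw [hK2]; field_simp
  rw [hDm2]
  field_simp
  ring

/-- Every `2 × 2` complex matrix within Frobenius distance `1/12` of
`diag(1, -1/2 + i)` is apportionable. -/
theorem apportionable_near_diag (B : Matrix (Fin 2) (Fin 2) ℂ)
    (h : frobNorm (Matrix.diagonal ![1, -(1 / 2) + Complex.I] - B) < 1 / 12) :
    IsApportionable B := by
  -- extract entrywise bound
  have h' := (Real.sqrt_lt' (by norm_num : (0:ℝ) < 1/12)).mp h
  rw [Fin.sum_univ_two, Fin.sum_univ_two, Fin.sum_univ_two] at h'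
  simp only [Matrix.sub_apply, Matrix.diagonal_apply_eq,
    Matrix.diagonal_apply_ne _ (show (0:Fin 2) ≠ 1 by decide),
    Matrix.diagonal_apply_ne _ (show (1:Fin 2) ≠ 0 by decide),
    Matrix.cons_val_zero, Matrix.cons_val_one, Matrix.head_cons] at h'
  rw [norm_sub_rev 1 (B 0 0),
      norm_sub_rev _ (B 1 1)] at h'
  simp only [zero_sub, norm_neg] at h'
  set a : ℂ := B 0 0 with ha_def
  set b : ℂ := B 0 1 with hb_def
  set c : ℂ := B 1 0 with hc_def
  set e : ℂ := B 1 1 with he_def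
  have hsum : ‖(a-1)‖^2 + ‖b‖^2 + ‖c‖^2
      + ‖(e - (-(1/2)+I))‖^2 < 1/144 := by
    norm_num at h' ⊢
    linarith
  obtain ⟨hf_lb, hf2Dm, hDm_lb, hT_lb, hz_lb, hzdiff, htt₀, hP12⟩ :=
    numeric_bounds a b c e hsum
  -- square root of the discriminant, with branch choice
  obtain ⟨s₁, hs₁⟩ := IsAlgClosed.exists_pow_nat_eq ((a+e)^2 - 4*(a*e-b*c)) (n := 2) (by norm_num)
  set s : ℂ := if ‖(s₁ - (3/2 - I))‖ ≤ ‖(s₁ + (3/2 - I))‖ then s₁ else -s₁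
    with hs_def
  have hs : s^2 = (a+e)^2 - 4*(a*e-b*c) := by
    rw [hs_def]; split
    · exact hs₁
    · rw [neg_pow]; simpa using hs₁
  have hsle : ‖(s - (3/2 - I))‖ ≤ ‖(s + (3/2 - I))‖ := by
    rw [hs_def]; split
    · assumption
    · next hcond =>
      rw [show -s₁ - ((3:ℂ)/2 - I) = -(s₁ + (3/2 - I)) by ring,
          show -s₁ + ((3:ℂ)/2 - I) = -(s₁ - (3/2 - I)) by ring,
          norm_neg, norm_neg]
      linarith [not_le.mp hcond]
  have hw₀sq : ((3:ℂ)/2 - I)^2 = 5/4 - 3*I := by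
    simp [Complex.ext_iff, pow_two, Complex.mul_re, Complex.mul_im]; norm_num
  have hsqb : ‖(s - (3/2 - I))‖^2 ≤ 7917/10000 := by
    calc ‖(s - (3/2 - I))‖^2
        ≤ ‖(s - (3/2 - I))‖ * ‖(s + (3/2 - I))‖ := by
          nlinarith [norm_nonneg (s - (3/2 - I))]
      _ = ‖((s - (3/2 - I)) * (s + (3/2 - I)))‖ := (norm_mul _ _).symm
      _ = ‖((a+e)^2 - 4*(a*e-b*c) - (5/4 - 3*I))‖ := by
          rw [show (s - ((3:ℂ)/2 - I)) * (s + (3/2 - I)) = s^2 - ((3:ℂ)/2 - I)^2 by ring,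
            hs, hw₀sq]
      _ ≤ 7917/10000 := hzdiff
  have hsw : ‖(s - (3/2 - I))‖ ≤ 8899/10000 := by
    nlinarith [norm_nonneg (s - (3/2 - I))]
  have hs0 : s ≠ 0 := by
    intro h0
    rw [h0] at hs
    have : ‖((a+e)^2 - 4*(a*e-b*c))‖ = 0 := by rw [← hs]; simp
    linarith
  -- eigenvalues
  set l : ℂ := ((a+e) + s)/2 with hl_def
  set mu : ℂ := ((a+e) - s)/2 with hmu_def
  have hl : l^2 - (a+e)*l + (a*e-b*c) = 0 := by
    rw [hl_def]; linear_combination (1/4) * hs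
  have hmu : mu^2 - (a+e)*mu + (a*e-b*c) = 0 := by
    rw [hmu_def]; linear_combination (1/4) * hs
  have hlmu : l - mu = s := by rw [hl_def, hmu_def]; ring
  have hmua : mu - a ≠ 0 := by
    have := mu_ne_a htt₀ hP12 hsw
    rw [hmu_def]
    exact this
  -- real constants
  set T : ℝ := ‖(a+e)‖ with hT_def
  set Dm : ℝ := ‖(a*e-b*c)‖ with hDm_def
  set f : ℝ := ((starRingEnd ℂ) ((a+e)^2) * (a*e-b*c)).re with hf_def
  have hf0 : 0 < f := by rw [hf_def]; linarith
  have hT0 : 0 < T := by rw [hT_def]; linarith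
  have hDm0 : 0 < Dm := by rw [hDm_def]; linarith
  set K : ℝ := Real.sqrt (Dm^2*T^2/(2*f)) with hK_def
  have hK2 : K^2 = Dm^2*T^2/(2*f) := Real.sq_sqrt (by positivity)
  have hK0 : 0 < K := Real.sqrt_pos.mpr (by positivity)
  have hKT : T^2/4 ≤ K^2 := by
    rw [hK2, le_div_iff₀ (by positivity)]
    nlinarith
  set r : ℝ := Real.sqrt (K^2 - T^2/4) with hr_def
  have hr2 : r^2 = K^2 - T^2/4 := Real.sq_sqrt (by linarith)
  set ρ : ℝ := r / T with hρ_def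
  -- the uniform matrix C
  set α : ℂ := (a+e) * (1/2 + (ρ:ℂ)*I) with hα_def
  set δ : ℂ := (a+e) * (1/2 - (ρ:ℂ)*I) with hδ_def
  set β : ℂ := (α*δ - (a*e-b*c)) * ((K:ℝ):ℂ)⁻¹ with hβ_def
  have hhalf : ‖((1:ℂ)/2 + (ρ:ℂ)*I)‖^2 = 1/4 + ρ^2 := by
    rw [Complex.sq_norm]
    simp [Complex.normSq_apply]
    norm_num; ring
  have hhalf' : ‖((1:ℂ)/2 - (ρ:ℂ)*I)‖^2 = 1/4 + ρ^2 := by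
    rw [Complex.sq_norm]
    simp [Complex.normSq_apply]
    norm_num; ring
  have hαabs : ‖α‖ = K := by
    refine sq_eq_of_nonneg (norm_nonneg _) (le_of_lt hK0) ?_
    rw [hα_def, norm_mul, mul_pow, hhalf, ← hT_def, hρ_def]
    exact rh5 hT0 hr2
  have hδabs : ‖δ‖ = K := by
    refine sq_eq_of_nonneg (norm_nonneg _) (le_of_lt hK0) ?_
    rw [hδ_def, norm_mul, mul_pow, hhalf', ← hT_def, hρ_def]
    exact rh5 hT0 hr2
  have hfre : ((a+e)^2 * (starRingEnd ℂ) (a*e-b*c)).re = f := by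
    rw [hf_def, show (a+e)^2 * (starRingEnd ℂ) (a*e-b*c)
      = (starRingEnd ℂ) ((starRingEnd ℂ) ((a+e)^2) * (a*e-b*c)) by
        rw [map_mul, Complex.conj_conj], Complex.conj_re]
  have hprodabs : ‖(α*δ - (a*e-b*c))‖ = K^2 := by
    refine sq_eq_of_nonneg (norm_nonneg _) (by positivity) ?_
    have hcast : ((1/4+ρ^2 : ℝ):ℂ) = 1/4 + (ρ:ℂ)^2 := by push_cast; ring
    have hprod : α*δ - (a*e-b*c) = ((1/4+ρ^2 : ℝ):ℂ)*(a+e)^2 - (a*e-b*c) := by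
      rw [hα_def, hδ_def, hcast]
      linear_combination (-((a+e)^2 * ((ρ:ℂ))^2)) * Complex.I_sq
    rw [hprod, Complex.sq_norm, Complex.normSq_sub, Complex.normSq_mul,
      Complex.normSq_ofReal, map_pow]
    have ht2 : Complex.normSq (a+e) = T^2 := (Complex.sq_norm (a+e)).symm
    have hd2 : Complex.normSq (a*e-b*c) = Dm^2 := (Complex.sq_norm _).symm
    have hre2 : (((1/4+ρ^2:ℝ):ℂ)*(a+e)^2 * (starRingEnd ℂ) (a*e-b*c)).re = (1/4+ρ^2) * f := by
      rw [mul_assoc, Complex.re_ofReal_mul, hfre]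
    rw [ht2, hd2, hre2, hρ_def]
    linear_combination rh6 hT0 hf0 hK2 hr2
  have hβabs : ‖β‖ = K := by
    rw [hβ_def, norm_mul, norm_inv, Complex.norm_real, Real.norm_eq_abs, abs_of_pos hK0, hprodabs,
      pow_two, mul_assoc, mul_inv_cancel₀ (ne_of_gt hK0), mul_one]
  have hβ0 : β ≠ 0 := by
    intro h0
    rw [h0] at hβabs
    simp at hβabs
    linarith
  have hγβ : ((K:ℝ):ℂ) * β = α*δ - (a*e-b*c) := by
    rw [hβ_def]
    have : ((K:ℝ):ℂ) ≠ 0 := by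
      simpa using ne_of_gt hK0
    field_simp
  have hαδsum : α + δ = a + e := by
    rw [hα_def, hδ_def]; push_cast; ring
  -- the matrices
  have hBP : B * !![l-e, b; c, mu-a] = !![l-e, b; c, mu-a] * !![l,0;0,mu] := by
    rw [Matrix.eta_fin_two B, ← ha_def, ← hb_def, ← hc_def, ← he_def]
    ext i j
    fin_cases i <;> fin_cases j <;>
      simp [Matrix.mul_apply, Fin.sum_univ_two, Fin.mk_zero, Fin.mk_one]
    · linear_combination -hl
    · ring
    · ring
    · linear_combination -hmu
  have hCQ : !![α, β; ((K:ℝ):ℂ), δ] * !![β, β; l-α, mu-α]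
      = !![β, β; l-α, mu-α] * !![l,0;0,mu] := by
    ext i j
    fin_cases i <;> fin_cases j <;>
      simp [Matrix.mul_apply, Fin.sum_univ_two, Fin.mk_zero, Fin.mk_one]
    · ring
    · ring
    · linear_combination hγβ - hl + l * hαδsum
    · linear_combination hγβ - hmu + mu * hαδsum
  have hdetP : IsUnit (!![l-e, b; c, mu-a]).det := by
    rw [Matrix.det_fin_two_of]
    have hval : (l-e)*(mu-a) - b*c = (mu-a)*s := by
      linear_combination hmu + (mu-a)*hlmu
    rw [hval]
    exact isUnit_iff_ne_zero.mpr (mul_ne_zero hmua hs0)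
  have hdetQ : IsUnit (!![β, β; l-α, mu-α]).det := by
    rw [Matrix.det_fin_two_of]
    have hval : β*(mu-α) - β*(l-α) = -(β*s) := by
      linear_combination -β*hlmu
    rw [hval]
    exact isUnit_iff_ne_zero.mpr (neg_ne_zero.mpr (mul_ne_zero hβ0 hs0))
  obtain ⟨hMu, hMconj⟩ := conj_similar hdetP hdetQ hBP hCQ
  refine ⟨_, hMu, K, le_of_lt hK0, ?_⟩
  rw [hMconj]
  intro i j
  fin_cases i <;> fin_cases j <;>
    simp [Fin.mk_zero, Fin.mk_one]
  · exact hαabs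
  · exact hβabs
  · exact le_of_lt hK0
  · exact hδabs
end

section
/- For every λ ∈ ℂ, the 3×3 matrices [[λ, 1, 0], [0, λ, 0], [0, 0, 0]] and [[λ, 0, 0], [0, 0, 1], [0, 0, 0]] are both apportionable. -/
private lemma apportion_aux {A B M : Matrix (Fin 3) (Fin 3) ℂ}
    (hd : IsUnit M.det) (h : M * A = B * M) (hB : IsUniform B) :
    IsApportionable A :=
  ⟨M, (Matrix.isUnit_iff_isUnit_det M).2 hd, by
    rw [h, Matrix.mul_assoc, Matrix.mul_nonsing_inv M hd, Matrix.mul_one]; exact hB⟩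

private lemma abs_mk_one {u v : ℝ} (h : u * u + v * v = 1) :
    ‖(⟨u, v⟩ : ℂ)‖ = 1 := by
  rw [Complex.norm_def, Complex.normSq_mk, h, Real.sqrt_one]

/-- For every `λ ∈ ℂ`, the matrices `[[λ,1,0],[0,λ,0],[0,0,0]]` and
`[[λ,0,0],[0,0,1],[0,0,0]]` are apportionable. -/
theorem three_by_three_examples_apportionable (lam : ℂ) :
    IsApportionable !![lam, 1, 0; 0, lam, 0; 0, 0, 0] ∧
      IsApportionable !![lam, 0, 0; 0, 0, 1; 0, 0, 0] := by
  have h3 : Real.sqrt 3 * Real.sqrt 3 = 3 := Real.mul_self_sqrt (by norm_num)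
  set a : ℂ := ⟨1/2, Real.sqrt 3 / 2⟩ with ha_def
  set ω : ℂ := ⟨-1/2, Real.sqrt 3 / 2⟩ with hω_def
  have ha : ‖a‖ = 1 := abs_mk_one (by nlinarith [h3])
  have ha' : ‖1 - a‖ = 1 := by
    have h1 : (1 : ℂ) - a = ⟨1/2, -(Real.sqrt 3 / 2)⟩ := by
      apply Complex.ext <;> norm_num [ha_def]
    rw [h1]; exact abs_mk_one (by nlinarith [h3])
  have hω : ‖ω‖ = 1 := abs_mk_one (by nlinarith [h3])
  have hω' : ‖-1 - ω‖ = 1 := by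
    have h1 : (-1 : ℂ) - ω = ⟨-1/2, -(Real.sqrt 3 / 2)⟩ := by
      apply Complex.ext <;> norm_num [hω_def]
    rw [h1]; exact abs_mk_one (by nlinarith [h3])
  by_cases hlam : lam = 0
  · subst hlam
    constructor
    · refine apportion_aux (M := !![1, 1, ω; 1, 0, -1; 1, 0, 0])
        (B := !![1, ω, -1 - ω; 1, ω, -1 - ω; 1, ω, -1 - ω]) ?_ ?_ ?_
      · have h1 : (!![1, 1, ω; 1, 0, -1; 1, 0, 0] : Matrix (Fin 3) (Fin 3) ℂ).det = -1 := by
          simp [Matrix.det_fin_three, Matrix.vecHead, Matrix.vecTail]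
        rw [h1]; exact isUnit_iff_ne_zero.2 (by norm_num)
      · ext i j
        fin_cases i <;> fin_cases j <;>
          simp [Matrix.mul_apply, Fin.sum_univ_three, Matrix.vecHead, Matrix.vecTail] <;> ring
      · refine ⟨1, zero_le_one, fun i j => ?_⟩
        fin_cases i <;> fin_cases j <;>
          simp [Matrix.vecHead, Matrix.vecTail, hω, hω']
    · refine apportion_aux (M := !![ω, 1, 1; -1, 1, 0; 0, 1, 0])
        (B := !![1, ω, -1 - ω; 1, ω, -1 - ω; 1, ω, -1 - ω]) ?_ ?_ ?_
      · have h1 : (!![ω, 1, 1; -1, 1, 0; 0, 1, 0] : Matrix (Fin 3) (Fin 3) ℂ).det = -1 := by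
          simp [Matrix.det_fin_three, Matrix.vecHead, Matrix.vecTail]
        rw [h1]; exact isUnit_iff_ne_zero.2 (by norm_num)
      · ext i j
        fin_cases i <;> fin_cases j <;>
          simp [Matrix.mul_apply, Fin.sum_univ_three, Matrix.vecHead, Matrix.vecTail] <;> ring
      · refine ⟨1, zero_le_one, fun i j => ?_⟩
        fin_cases i <;> fin_cases j <;>
          simp [Matrix.vecHead, Matrix.vecTail, hω, hω']
  · constructor
    · refine apportion_aux (M := !![lam, 0, 2 - a; lam, 0, 1 - a; 0, 1, -1])
        (B := !![lam * a, lam * (1 - a), lam;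
                 lam * a, lam * (1 - a), lam;
                 lam, -lam, lam]) ?_ ?_ ?_
      · have h1 : (!![lam, 0, 2 - a; lam, 0, 1 - a; 0, 1, -1] :
            Matrix (Fin 3) (Fin 3) ℂ).det = lam := by
          simp [Matrix.det_fin_three, Matrix.vecHead, Matrix.vecTail]; ring
        rw [h1]; exact isUnit_iff_ne_zero.2 hlam
      · ext i j
        fin_cases i <;> fin_cases j <;>
          simp [Matrix.mul_apply, Fin.sum_univ_three, Matrix.vecHead, Matrix.vecTail] <;> ring
      · refine ⟨‖lam‖, norm_nonneg _, fun i j => ?_⟩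
        fin_cases i <;> fin_cases j <;>
          simp [Matrix.vecHead, Matrix.vecTail, map_mul, ha, ha', map_neg]
    · refine apportion_aux (M := !![1, 2 * lam, 1; 1, 2 * lam, 0; 1, 0, 1])
        (B := !![lam, -lam, lam; lam, -lam, lam; -lam, lam, lam]) ?_ ?_ ?_
      · have h1 : (!![1, 2 * lam, 1; 1, 2 * lam, 0; 1, 0, 1] :
            Matrix (Fin 3) (Fin 3) ℂ).det = -2 * lam := by
          simp [Matrix.det_fin_three, Matrix.vecHead, Matrix.vecTail]
        rw [h1]
        exact isUnit_iff_ne_zero.2 (by simpa using hlam)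
      · ext i j
        fin_cases i <;> fin_cases j <;>
          simp [Matrix.mul_apply, Fin.sum_univ_three, Matrix.vecHead, Matrix.vecTail] <;> ring
      · refine ⟨‖lam‖, norm_nonneg _, fun i j => ?_⟩
        fin_cases i <;> fin_cases j <;>
          simp [Matrix.vecHead, Matrix.vecTail, map_neg]
end
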